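/- Let f : ℝ/ℤ → ℝⁿ be a closed curve of class C² with f'(θ) ≠ 0 for all θ, let t(θ) = f'(θ)/‖f'(θ)‖, and let θ₁ ≠ θ₂ be parameters with f(θ₁) ≠ f(θ₂). Define cos φ(θ₁,θ₂) = 2(Δf·t(θ₁))(Δf·t(θ₂))/‖Δf‖² − t(θ₁)·t(θ₂), where Δf = f(θ₁) − f(θ₂). Then the mixed second partial derivative satisfies ∂²/∂θ₁∂θ₂ [ log( ‖f(θ₁) − f(θ₂)‖² / (‖f'(θ₁)‖ ‖f'(θ₂)‖) ) ] = (2 ‖f'(θ₁)‖ ‖f'(θ₂)‖ / ‖f(θ₁) − f(θ₂)‖²) · cos φ(θ₁,θ₂). -/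

import Mathlib

/-!
Away from the diagonal the kernel splits as
`log ‖f a - f b‖² - log ‖f' a‖ - log ‖f' b‖`; the last two terms depend on one variable only and
are killed by the mixed derivative. What remains is
`∂_a (-2 ⟪f a - f b, f' b⟫ / ‖f a - f b‖²)`, a quotient-rule computation that is exactly
`(2 ‖f' a‖ ‖f' b‖ / ‖Δf‖²) cos φ` once the unit tangents are written as `f' / ‖f'‖`.
-/

open Real Filter Topology
open scoped RealInnerProductSpace

section

variable {E : Type*} [NormedAddCommGroup E] [InnerProductSpace ℝ E] {f : ℝ → E}

theorem HasDerivAt.inner_sub_div_norm_sub_sq {f' : E} {x : ℝ} (hf : HasDerivAt f f' x)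
    (c v : E) (hx : f x ≠ c) :
    HasDerivAt (fun t => ⟪f t - c, v⟫ / ‖f t - c‖ ^ 2)
      ((⟪f', v⟫ * ‖f x - c‖ ^ 2 - ⟪f x - c, v⟫ * (2 * ⟪f x - c, f'⟫)) / (‖f x - c‖ ^ 2) ^ 2)
      x := by
  have hsub := hf.sub_const c
  have hnum := hsub.inner ℝ (hasDerivAt_const x v)
  simp only [inner_zero_right, zero_add] at hnum
  exact hnum.div hsub.norm_sq (pow_ne_zero _ (norm_ne_zero_iff.mpr (sub_ne_zero.mpr hx)))

theorem hasDerivAt_log_sq_norm_sub_div_norm_deriv {a x : ℝ} (hf : DifferentiableAt ℝ f x)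
    (hf' : DifferentiableAt ℝ (deriv f) x) (ha : deriv f a ≠ 0) (hx : deriv f x ≠ 0)
    (hax : f a ≠ f x) :
    HasDerivAt (fun b => log (‖f a - f b‖ ^ 2 / (‖deriv f a‖ * ‖deriv f b‖)))
      (-2 * (⟪f a - f x, deriv f x⟫ / ‖f a - f x‖ ^ 2) - deriv (fun b => log ‖deriv f b‖) x)
      x := by
  have hsplit : (fun b => log (‖f a - f b‖ ^ 2 / (‖deriv f a‖ * ‖deriv f b‖)))
      =ᶠ[𝓝 x] fun b => log (‖f a - f b‖ ^ 2) - (log ‖deriv f a‖ + log ‖deriv f b‖) := by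
    filter_upwards [hf.continuousAt.eventually_ne hax.symm,
      hf'.continuousAt.eventually_ne hx] with b hfb hdb
    have hsq : ‖f a - f b‖ ^ 2 ≠ 0 :=
      pow_ne_zero _ (norm_ne_zero_iff.mpr (sub_ne_zero.mpr hfb.symm))
    have hna : ‖deriv f a‖ ≠ 0 := norm_ne_zero_iff.mpr ha
    have hnb : ‖deriv f b‖ ≠ 0 := norm_ne_zero_iff.mpr hdb
    rw [log_div hsq (mul_ne_zero hna hnb), log_mul hna hnb]
  have hdist : HasDerivAt (fun b => log (‖f a - f b‖ ^ 2))
      (2 * ⟪f a - f x, -deriv f x⟫ / ‖f a - f x‖ ^ 2) x :=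
    (hf.hasDerivAt.const_sub (f a)).norm_sq.log
      (pow_ne_zero _ (norm_ne_zero_iff.mpr (sub_ne_zero.mpr hax)))
  have hspeed : HasDerivAt (fun b => log ‖deriv f b‖)
      (deriv (fun b => log ‖deriv f b‖) x) x :=
    ((hf'.norm ℝ hx).log (norm_ne_zero_iff.mpr hx)).hasDerivAt
  refine ((hdist.sub ((hasDerivAt_const x _).add hspeed)).congr_of_eventuallyEq hsplit).congr_deriv
    ?_
  rw [inner_neg_right]
  ring

end

theorem mixed_partial_log_eq_cos_conformal_angle
    (n : ℕ) (f : ℝ → EuclideanSpace ℝ (Fin n))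
    (hC2 : ContDiff ℝ 2 f)
    (hreg : ∀ θ : ℝ, deriv f θ ≠ 0)
    (θ₁ θ₂ : ℝ) (hne : f θ₁ ≠ f θ₂) :
    deriv (fun a : ℝ => deriv (fun b : ℝ =>
        Real.log (‖f a - f b‖ ^ 2 / (‖deriv f a‖ * ‖deriv f b‖))) θ₂) θ₁
      = (2 * ‖deriv f θ₁‖ * ‖deriv f θ₂‖ / ‖f θ₁ - f θ₂‖ ^ 2) *
        (2 * ⟪f θ₁ - f θ₂, ‖deriv f θ₁‖⁻¹ • deriv f θ₁⟫ *
             ⟪f θ₁ - f θ₂, ‖deriv f θ₂‖⁻¹ • deriv f θ₂⟫ / ‖f θ₁ - f θ₂‖ ^ 2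
          - ⟪‖deriv f θ₁‖⁻¹ • deriv f θ₁, ‖deriv f θ₂‖⁻¹ • deriv f θ₂⟫) := by
  have hf : Differentiable ℝ f := hC2.differentiable (by norm_num)
  have hf' : Differentiable ℝ (deriv f) := hC2.differentiable_deriv_two
  set c := deriv (fun b => log ‖deriv f b‖) θ₂
  have hinner : (fun a => deriv (fun b =>
        log (‖f a - f b‖ ^ 2 / (‖deriv f a‖ * ‖deriv f b‖))) θ₂)
      =ᶠ[𝓝 θ₁] fun a => -2 * (⟪f a - f θ₂, deriv f θ₂⟫ / ‖f a - f θ₂‖ ^ 2) - c := by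
    filter_upwards [(hf θ₁).continuousAt.eventually_ne hne] with a ha
    exact (hasDerivAt_log_sq_norm_sub_div_norm_deriv (hf θ₂) (hf' θ₂) (hreg a) (hreg θ₂)
      ha).deriv
  rw [hinner.deriv_eq, ((((hf θ₁).hasDerivAt.inner_sub_div_norm_sub_sq (f θ₂) (deriv f θ₂)
    hne).const_mul (-2)).sub_const c).deriv]
  have h₁ : ‖deriv f θ₁‖ ≠ 0 := norm_ne_zero_iff.mpr (hreg θ₁)
  have h₂ : ‖deriv f θ₂‖ ≠ 0 := norm_ne_zero_iff.mpr (hreg θ₂)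
  have hΔ : ‖f θ₁ - f θ₂‖ ≠ 0 := norm_ne_zero_iff.mpr (sub_ne_zero.mpr hne)
  simp only [real_inner_smul_left, real_inner_smul_right]
  field_simp
  ring
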